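/- Let J = S \ {s_i : i ∈ I}. Every maximal valid firing sequence in the Modified Kostant Game with active set I (one that cannot be extended, i.e., no vertex is sad in the final configuration) has length exactly ℓ(w_0^J) = |Φ^+ \ Φ_J^+|, where w_0^J is the unique longest element of W^J; moreover, every maximal valid firing sequence (i_1,…,i_m) satisfies s_{i_m} ⋯ s_{i_1} = w_0^J, so all maximal valid firing sequences terminate in one and the same final configuration. -/

import Mathlib

open scoped Classical RealInnerProductSpace

noncomputable section

variable {n d : ℕ}

/-- The pairing `⟨β, γ^∨⟩ = 2(β,γ)/(γ,γ)` of a vector with a coroot. -/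
def rsPair (β γ : EuclideanSpace ℝ (Fin d)) : ℝ := 2 * ⟪β, γ⟫ / ⟪γ, γ⟫

/-- The coroot `γ^∨ = 2γ/(γ,γ)`. -/
def rsCoroot (γ : EuclideanSpace ℝ (Fin d)) : EuclideanSpace ℝ (Fin d) :=
  (2 / ⟪γ, γ⟫) • γ

/-- `⟨·, γ^∨⟩` as a linear functional. -/
def corootForm (γ : EuclideanSpace ℝ (Fin d)) : EuclideanSpace ℝ (Fin d) →ₗ[ℝ] ℝ where
  toFun x := 2 * ⟪x, γ⟫ / ⟪γ, γ⟫
  map_add' x y := by simp only [inner_add_left]; ring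
  map_smul' c x := by simp only [real_inner_smul_left, RingHom.id_apply, smul_eq_mul]; ring

/-- A finite reduced crystallographic root system in the Euclidean space `ℝ^d`, together with a
chosen base of simple roots `α 0, …, α (n-1)`: every root is an integral linear combination of
the simple roots with all coefficients nonnegative or all nonpositive. -/
structure RootSystemBase (n d : ℕ) : Type where
  Φ : Finset (EuclideanSpace ℝ (Fin d))
  α : Fin n → EuclideanSpace ℝ (Fin d)
  α_mem : ∀ i, α i ∈ Φ
  nonzero : ∀ β ∈ Φ, β ≠ 0
  reduced : ∀ β ∈ Φ, ∀ t : ℝ, t • β ∈ Φ → t = 1 ∨ t = -1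
  crystallographic : ∀ β ∈ Φ, ∀ γ ∈ Φ, ∃ k : ℤ, rsPair β γ = (k : ℝ)
  reflClosed : ∀ β ∈ Φ, ∀ γ ∈ Φ, β - rsPair β γ • γ ∈ Φ
  indep : LinearIndependent ℝ α
  base : ∀ β ∈ Φ, ∃ c : Fin n → ℤ,
    β = ∑ i, (c i : ℝ) • α i ∧ ((∀ i, 0 ≤ c i) ∨ (∀ i, c i ≤ 0))

/-- The extended space `E' = E ⊕ ℝ^I`. -/
abbrev ExtSp (n d : ℕ) (I : Finset (Fin n)) : Type :=
  EuclideanSpace ℝ (Fin d) × ({p : Fin n // p ∈ I} → ℝ)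

/-- The total source vector `β = ∑_{p ∈ I} β_p` in the extended space. -/
def betaVec (n d : ℕ) (I : Finset (Fin n)) : ExtSp n d I := (0, fun _ => 1)

namespace RootSystemBase

variable (R : RootSystemBase n d)

lemma alpha_ne_zero (i : Fin n) : R.α i ≠ 0 := R.nonzero _ (R.α_mem i)

lemma inner_alpha_ne_zero (i : Fin n) : ⟪R.α i, R.α i⟫ ≠ 0 := fun h =>
  R.alpha_ne_zero i ((inner_self_eq_zero (𝕜 := ℝ)).mp h)

lemma corootForm_alpha_self (i : Fin n) : corootForm (R.α i) (R.α i) = 2 := by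
  have h2 := R.inner_alpha_ne_zero i
  show 2 * ⟪R.α i, R.α i⟫ / ⟪R.α i, R.α i⟫ = 2
  rw [mul_div_assoc, div_self h2, mul_one]

/-- The simple reflection `s_i : x ↦ x - ⟨x, α_i^∨⟩ α_i` as a linear automorphism of `E`. -/
def sRefl (i : Fin n) :
    EuclideanSpace ℝ (Fin d) ≃ₗ[ℝ] EuclideanSpace ℝ (Fin d) :=
  Module.reflection (R.corootForm_alpha_self i)

/-- The Weyl group `W`, as the subgroup of linear automorphisms of `E` generated by the
simple reflections. -/
def weyl : Subgroup (EuclideanSpace ℝ (Fin d) ≃ₗ[ℝ] EuclideanSpace ℝ (Fin d)) :=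
  Subgroup.closure (Set.range R.sRefl)

/-- `wordProd [i₁, …, i_t] = s_{i₁} ⋯ s_{i_t}`. -/
def wordProd (l : List (Fin n)) :
    EuclideanSpace ℝ (Fin d) ≃ₗ[ℝ] EuclideanSpace ℝ (Fin d) :=
  (l.map R.sRefl).prod

/-- The Weyl group element `s_{i_t} ⋯ s_{i_1}` associated to the firing sequence
`(i_1, …, i_t)`. -/
def seqProd (l : List (Fin n)) :
    EuclideanSpace ℝ (Fin d) ≃ₗ[ℝ] EuclideanSpace ℝ (Fin d) :=
  (l.reverse.map R.sRefl).prod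

/-- The length function `ℓ` of the Coxeter system `(W, S)`: the minimal number of simple
reflections needed to express `w`. -/
def len (w : EuclideanSpace ℝ (Fin d) ≃ₗ[ℝ] EuclideanSpace ℝ (Fin d)) : ℕ :=
  sInf {t | ∃ l : List (Fin n), l.length = t ∧ R.wordProd l = w}

/-- The set `W^J` of minimal length representatives of `W/W_J`, for `J = S \ {s_i : i ∈ I}`:
those `w ∈ W` with `ℓ(w s_j) > ℓ(w)` for all `j ∉ I`. -/
def minReps (I : Finset (Fin n)) :
    Set (EuclideanSpace ℝ (Fin d) ≃ₗ[ℝ] EuclideanSpace ℝ (Fin d)) :=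
  {w | w ∈ R.weyl ∧ ∀ j, j ∉ I → R.len w < R.len (w * R.sRefl j)}

/-- The Cartan matrix `a_{uv} = ⟨α_u, α_v^∨⟩` (an integer by crystallinity). -/
def cartan (u v : Fin n) : ℤ := ⌊rsPair (R.α u) (R.α v)⌋

/-- The set `Φ⁺` of positive roots. -/
def posRoots : Finset (EuclideanSpace ℝ (Fin d)) :=
  R.Φ.filter fun β => ∃ c : Fin n → ℤ, β = ∑ i, (c i : ℝ) • R.α i ∧ ∀ i, 0 ≤ c i

/-- The set `Φ_P⁺` of positive roots lying in the span of the simple roots `α_j`, `j ∈ P`. -/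
def parPos (P : Finset (Fin n)) : Finset (EuclideanSpace ℝ (Fin d)) :=
  R.posRoots.filter fun β => β ∈ Submodule.span ℝ (R.α '' (P : Set (Fin n)))

/-- `∑_{u ≠ v} (−a_{uv}) c_u + [v ∈ I]`. -/
def chipBound (I : Finset (Fin n)) (c : Fin n → ℤ) (v : Fin n) : ℤ :=
  (∑ u ∈ Finset.univ.erase v, -(R.cartan u v) * c u) + (if v ∈ I then 1 else 0)

/-- Vertex `v` is sad in the configuration `c` (Modified Kostant Game with active set `I`). -/
def Sad (I : Finset (Fin n)) (c : Fin n → ℤ) (v : Fin n) : Prop :=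
  2 * c v < R.chipBound I c v

/-- Firing vertex `v`. -/
def fire (I : Finset (Fin n)) (c : Fin n → ℤ) (v : Fin n) : Fin n → ℤ :=
  Function.update c v (R.chipBound I c v - c v)

end RootSystemBase

/-- `ValidFrom R I c l`: starting from the configuration `c`, the sequence `l` fires a sad
vertex at each step. -/
def RootSystemBase.ValidFrom (R : RootSystemBase n d) (I : Finset (Fin n)) :
    (Fin n → ℤ) → List (Fin n) → Prop
  | _, [] => True
  | c, v :: l => R.Sad I c v ∧ RootSystemBase.ValidFrom R I (R.fire I c v) l

namespace RootSystemBase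

variable (R : RootSystemBase n d)

/-- A valid firing sequence: starts at the zero configuration and fires a sad vertex at
each step. -/
def Valid (I : Finset (Fin n)) (l : List (Fin n)) : Prop := R.ValidFrom I 0 l

/-- The configuration reached after playing the sequence `l` from the zero configuration. -/
def play (I : Finset (Fin n)) (l : List (Fin n)) : Fin n → ℤ :=
  l.foldl (R.fire I) 0

/-- A maximal valid firing sequence: no vertex is sad in the final configuration. -/
def MaximalSeq (I : Finset (Fin n)) (l : List (Fin n)) : Prop :=
  R.Valid I l ∧ ∀ v, ¬ R.Sad I (R.play I l) v

/-- The (integer) coefficients of a vector in the basis of simple coroots, when they exist. -/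
def corootCoeffs (x : EuclideanSpace ℝ (Fin d)) : Fin n → ℤ :=
  if h : ∃ k : Fin n → ℤ, x = ∑ j, (k j : ℝ) • rsCoroot (R.α j) then h.choose else 0

/-- The `I`-height of a (co)vector: the sum over `j ∈ I` of its coefficients in the basis
of simple coroots. -/
def htI (I : Finset (Fin n)) (x : EuclideanSpace ℝ (Fin d)) : ℤ :=
  ∑ j ∈ I, R.corootCoeffs x j

end RootSystemBase

/-- The extended pairing `⟨·, α_i^∨⟩` on `E' = E ⊕ ℝ^I`, determined by
`⟨β_p, α_i^∨⟩ = −δ_{pi}`, as a linear functional. -/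
def extForm (R : RootSystemBase n d) (I : Finset (Fin n)) (i : Fin n) :
    ExtSp n d I →ₗ[ℝ] ℝ :=
  (corootForm (R.α i)).comp (LinearMap.fst ℝ _ _) -
    (if h : i ∈ I then
      (LinearMap.proj (R := ℝ) (φ := fun _ : {p : Fin n // p ∈ I} => ℝ) ⟨i, h⟩).comp
        (LinearMap.snd ℝ _ _)
    else 0)

namespace RootSystemBase

variable (R : RootSystemBase n d)

lemma extForm_apply (I : Finset (Fin n)) (i : Fin n) (x : ExtSp n d I) :
    extForm R I i x = corootForm (R.α i) x.1 - (if h : i ∈ I then x.2 ⟨i, h⟩ else 0) := by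
  by_cases h : i ∈ I <;> simp [extForm, h]

lemma extForm_alpha (I : Finset (Fin n)) (i : Fin n) :
    extForm R I i ((R.α i, 0) : ExtSp n d I) = 2 := by
  rw [R.extForm_apply]
  simp [R.corootForm_alpha_self i]

/-- The simple reflection `s_i : x ↦ x − ⟨x, α_i^∨⟩ α_i` on the extended space `E'`. -/
def extRefl (I : Finset (Fin n)) (i : Fin n) : ExtSp n d I ≃ₗ[ℝ] ExtSp n d I :=
  Module.reflection (R.extForm_alpha I i)

/-- The extended pairing `⟨x, α_i^∨⟩` for `x ∈ E'`. -/
def extPair (I : Finset (Fin n)) (x : ExtSp n d I) (i : Fin n) : ℝ := extForm R I i x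

/-- The action of `s_{i_t} ⋯ s_{i_1}` on the extended space `E'`. -/
def extSeqProd (I : Finset (Fin n)) (l : List (Fin n)) : ExtSp n d I ≃ₗ[ℝ] ExtSp n d I :=
  (l.reverse.map (R.extRefl I)).prod

end RootSystemBase

/-!
Let `ω_I` be the sum of the fundamental weights `ϖ_i`, `i ∈ I`. A configuration `c` is encoded by
the vector `∑ c_u α_u - ω_I`, on which firing `v` acts as the simple reflection `s_v`; after a
firing sequence with Weyl group element `w` the vector is therefore `w (-ω_I)`. Then `v` is sad
exactly when `w⁻¹ α_v` is a positive root pairing positively with `ω_I`, i.e. lies in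
`Φ⁺ \ Φ_J⁺`, and firing it adds that root to the inversion set `N(w)`. So along a valid sequence
`N(w) ⊆ Φ⁺ \ Φ_J⁺` grows by one root per step, and when no vertex is sad `w (-ω_I)` is dominant,
which forces `N(w) = Φ⁺ \ Φ_J⁺`. As `ℓ(w) = |N(w)|`, `N(w)` determines `w`, and every
`w ∈ W^J` has `N(w) ⊆ Φ⁺ \ Φ_J⁺`, this `w` is the longest element `w_0^J`.
-/

namespace RootSystemBase

variable (R : RootSystemBase n d)

section Reflections

lemma sRefl_apply (i : Fin n) (x : EuclideanSpace ℝ (Fin d)) :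
    R.sRefl i x = x - rsPair x (R.α i) • R.α i :=
  Module.reflection_apply _ _

@[simp]
lemma sRefl_alpha (i : Fin n) : R.sRefl i (R.α i) = -R.α i :=
  Module.reflection_apply_self _

@[simp]
lemma sRefl_inv (i : Fin n) : (R.sRefl i)⁻¹ = R.sRefl i :=
  Module.reflection_inv _

lemma sRefl_mul_self (i : Fin n) : R.sRefl i * R.sRefl i = 1 := by
  simpa only [sRefl_inv] using mul_inv_cancel (R.sRefl i)

lemma inner_sRefl_sRefl (i : Fin n) (x y : EuclideanSpace ℝ (Fin d)) :
    ⟪R.sRefl i x, R.sRefl i y⟫ = ⟪x, y⟫ := by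
  have := R.inner_alpha_ne_zero i
  simp only [sRefl_apply, rsPair, inner_sub_left, inner_sub_right, real_inner_smul_left,
    real_inner_smul_right, real_inner_comm (R.α i) y]
  field_simp
  ring

lemma rsPair_self {β : EuclideanSpace ℝ (Fin d)} (hβ : β ≠ 0) : rsPair β β = 2 := by
  rw [rsPair, mul_div_assoc, div_self (inner_self_ne_zero.mpr hβ), mul_one]

lemma neg_mem {β : EuclideanSpace ℝ (Fin d)} (hβ : β ∈ R.Φ) : -β ∈ R.Φ := by
  simpa only [rsPair_self (R.nonzero β hβ), two_smul, sub_add_eq_sub_sub, sub_self, zero_sub]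
    using R.reflClosed β hβ β hβ

lemma sRefl_apply_mem (i : Fin n) {β : EuclideanSpace ℝ (Fin d)} (hβ : β ∈ R.Φ) :
    R.sRefl i β ∈ R.Φ := by
  rw [sRefl_apply]
  exact R.reflClosed β hβ (R.α i) (R.α_mem i)

lemma cartan_cast (u v : Fin n) : (R.cartan u v : ℝ) = rsPair (R.α u) (R.α v) := by
  obtain ⟨k, hk⟩ := R.crystallographic (R.α u) (R.α_mem u) (R.α v) (R.α_mem v)
  rw [cartan, hk, Int.floor_intCast]

lemma cartan_self (v : Fin n) : (R.cartan v v : ℝ) = 2 := by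
  rw [cartan_cast, rsPair_self (R.alpha_ne_zero v)]

end Reflections

section Coordinates

def coord : EuclideanSpace ℝ (Fin d) →ₗ[ℝ] Fin n → ℝ :=
  Finsupp.lcoeFun ∘ₗ (Module.Basis.span R.indep).repr.toLinearMap ∘ₗ
    (Submodule.span ℝ (Set.range R.α)).orthogonalProjectionOnto.toLinearMap

lemma coord_alpha (i : Fin n) : R.coord (R.α i) = Pi.single i 1 := by
  have hproj : (Submodule.span ℝ (Set.range R.α)).orthogonalProjectionOnto (R.α i) =
      Module.Basis.span R.indep i := by
    rw [← Module.Basis.coe_span_apply R.indep i]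
    exact Submodule.orthogonalProjectionOnto_mem_subspace_eq_self (Module.Basis.span R.indep i)
  simp [coord, hproj, Finsupp.single_eq_pi_single]

lemma coord_sum_smul (c : Fin n → ℝ) : R.coord (∑ u, c u • R.α u) = c := by
  ext v
  simp [coord_alpha, Pi.single_apply]

lemma coord_eq_of_eq_sum {β : EuclideanSpace ℝ (Fin d)} {c : Fin n → ℝ}
    (h : β = ∑ u, c u • R.α u) : R.coord β = c := by
  rw [h, coord_sum_smul]

lemma eq_sum_coord {β : EuclideanSpace ℝ (Fin d)} (hβ : β ∈ R.Φ) :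
    β = ∑ u, R.coord β u • R.α u := by
  obtain ⟨c, hc, -⟩ := R.base β hβ
  rwa [R.coord_eq_of_eq_sum hc]

lemma inner_eq_sum_coord {γ : EuclideanSpace ℝ (Fin d)} (hγ : γ ∈ R.Φ)
    (x : EuclideanSpace ℝ (Fin d)) : ⟪x, γ⟫ = ∑ u, R.coord γ u * ⟪x, R.α u⟫ := by
  conv_lhs => rw [R.eq_sum_coord hγ]
  simp only [inner_sum, real_inner_smul_right]

end Coordinates

section Positivity

variable {R}

lemma mem_posRoots_iff {β : EuclideanSpace ℝ (Fin d)} (hβ : β ∈ R.Φ) :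
    β ∈ R.posRoots ↔ ∀ u, 0 ≤ R.coord β u := by
  constructor
  · rintro hp u
    obtain ⟨c, hc, hc0⟩ := (Finset.mem_filter.mp hp).2
    simp only [R.coord_eq_of_eq_sum hc]
    exact_mod_cast hc0 u
  · intro h
    obtain ⟨c, hc, -⟩ := R.base β hβ
    refine Finset.mem_filter.mpr ⟨hβ, c, hc, fun u => ?_⟩
    have := h u
    simp only [R.coord_eq_of_eq_sum hc] at this
    exact_mod_cast this

lemma neg_mem_posRoots_iff {β : EuclideanSpace ℝ (Fin d)} (hβ : β ∈ R.Φ) :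
    -β ∈ R.posRoots ↔ ∀ u, R.coord β u ≤ 0 := by
  simp [mem_posRoots_iff (R.neg_mem hβ)]

lemma mem_posRoots_or_neg_mem {β : EuclideanSpace ℝ (Fin d)} (hβ : β ∈ R.Φ) :
    β ∈ R.posRoots ∨ -β ∈ R.posRoots := by
  obtain ⟨c, hc, hpos | hneg⟩ := R.base β hβ
  · exact .inl <| (mem_posRoots_iff hβ).mpr fun u => by
      simp only [R.coord_eq_of_eq_sum hc]; exact_mod_cast hpos u
  · exact .inr <| (neg_mem_posRoots_iff hβ).mpr fun u => by
      simp only [R.coord_eq_of_eq_sum hc]; exact_mod_cast hneg u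

lemma mem_Φ_of_mem_posRoots {β : EuclideanSpace ℝ (Fin d)} (hβ : β ∈ R.posRoots) : β ∈ R.Φ :=
  (Finset.mem_filter.mp hβ).1

lemma neg_notMem_posRoots {β : EuclideanSpace ℝ (Fin d)} (hβ : β ∈ R.posRoots) :
    -β ∉ R.posRoots := by
  intro hneg
  have hΦ := mem_Φ_of_mem_posRoots hβ
  have hzero : R.coord β = 0 := funext fun u =>
    le_antisymm ((neg_mem_posRoots_iff hΦ).mp hneg u) ((mem_posRoots_iff hΦ).mp hβ u)
  apply R.nonzero β hΦ
  rw [R.eq_sum_coord hΦ, hzero]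
  simp

lemma neg_mem_posRoots_of_notMem {β : EuclideanSpace ℝ (Fin d)} (hβ : β ∈ R.Φ)
    (h : β ∉ R.posRoots) : -β ∈ R.posRoots :=
  (mem_posRoots_or_neg_mem hβ).resolve_left h

variable (R)

lemma alpha_mem_posRoots (i : Fin n) : R.α i ∈ R.posRoots :=
  (mem_posRoots_iff (R.α_mem i)).mpr fun u => by
    rw [coord_alpha, Pi.single_apply]
    split_ifs <;> norm_num

lemma neg_alpha_notMem_posRoots (i : Fin n) : -R.α i ∉ R.posRoots :=
  neg_notMem_posRoots (R.alpha_mem_posRoots i)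

lemma coord_sRefl_of_ne (i : Fin n) (β : EuclideanSpace ℝ (Fin d)) {u : Fin n} (hu : u ≠ i) :
    R.coord (R.sRefl i β) u = R.coord β u := by
  simp [sRefl_apply, coord_alpha, hu]

lemma sRefl_apply_mem_posRoots (i : Fin n) {β : EuclideanSpace ℝ (Fin d)}
    (hβ : β ∈ R.posRoots) (hne : β ≠ R.α i) : R.sRefl i β ∈ R.posRoots := by
  have hΦ := mem_Φ_of_mem_posRoots hβ
  have hcoord := (mem_posRoots_iff hΦ).mp hβ
  -- A positive root supported on `α i` alone is `α i`, since `Φ` is reduced.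
  obtain ⟨u, hui, hu⟩ : ∃ u, u ≠ i ∧ 0 < R.coord β u := by
    by_contra! hcon
    have hβi : β = R.coord β i • R.α i := by
      conv_lhs => rw [R.eq_sum_coord hΦ]
      refine Finset.sum_eq_single i (fun u _ hu => ?_) (by simp)
      rw [le_antisymm (hcon u hu) (hcoord u), zero_smul]
    rcases R.reduced (R.α i) (R.α_mem i) _ (hβi ▸ hΦ) with h1 | h1
    · exact hne (by rw [hβi, h1, one_smul])
    · linarith [hcoord i]
  refine (mem_posRoots_or_neg_mem (R.sRefl_apply_mem i hΦ)).resolve_right fun hneg => ?_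
  have := (neg_mem_posRoots_iff (R.sRefl_apply_mem i hΦ)).mp hneg u
  rw [R.coord_sRefl_of_ne i β hui] at this
  linarith

lemma mem_span_alpha_iff {β : EuclideanSpace ℝ (Fin d)} (hβ : β ∈ R.Φ) (P : Finset (Fin n)) :
    β ∈ Submodule.span ℝ (R.α '' (P : Set (Fin n))) ↔ ∀ u ∉ P, R.coord β u = 0 := by
  constructor
  · intro h u hu
    have hle : Submodule.span ℝ (R.α '' (P : Set (Fin n))) ≤
        LinearMap.ker (LinearMap.proj u ∘ₗ R.coord) := by
      refine Submodule.span_le.mpr ?_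
      rintro _ ⟨v, hv, rfl⟩
      have : v ≠ u := fun h => hu (h ▸ hv)
      simp [coord_alpha, this]
    simpa using hle h
  · intro h
    rw [R.eq_sum_coord hβ]
    refine Submodule.sum_mem _ fun u _ => ?_
    by_cases hu : u ∈ P
    · exact Submodule.smul_mem _ _ (Submodule.subset_span ⟨u, hu, rfl⟩)
    · rw [h u hu, zero_smul]
      exact Submodule.zero_mem _

lemma inner_nonneg_of_mem_posRoots {x β : EuclideanSpace ℝ (Fin d)}
    (hx : ∀ u, 0 ≤ ⟪x, R.α u⟫) (hβ : β ∈ R.posRoots) : 0 ≤ ⟪x, β⟫ := by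
  have hΦ := mem_Φ_of_mem_posRoots hβ
  rw [R.inner_eq_sum_coord hΦ]
  exact Finset.sum_nonneg fun u _ => mul_nonneg ((mem_posRoots_iff hΦ).mp hβ u) (hx u)

end Positivity

section Words

lemma wordProd_cons (i : Fin n) (l : List (Fin n)) :
    R.wordProd (i :: l) = R.sRefl i * R.wordProd l := by
  simp [wordProd]

lemma wordProd_append (l l' : List (Fin n)) :
    R.wordProd (l ++ l') = R.wordProd l * R.wordProd l' := by
  simp [wordProd]

lemma wordProd_singleton (i : Fin n) : R.wordProd [i] = R.sRefl i := by
  simp [wordProd]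

lemma wordProd_reverse (l : List (Fin n)) : R.wordProd l.reverse = (R.wordProd l)⁻¹ := by
  induction l with
  | nil => simp [wordProd]
  | cons i t ih =>
    rw [List.reverse_cons, wordProd_append, ih, wordProd_singleton, wordProd_cons, mul_inv_rev,
      sRefl_inv]

lemma seqProd_cons (v : Fin n) (l : List (Fin n)) :
    R.seqProd (v :: l) = R.seqProd l * R.sRefl v := by
  simp [seqProd]

lemma sRefl_mem_weyl (i : Fin n) : R.sRefl i ∈ R.weyl :=
  Subgroup.subset_closure ⟨i, rfl⟩

lemma mem_weyl_iff {w : EuclideanSpace ℝ (Fin d) ≃ₗ[ℝ] EuclideanSpace ℝ (Fin d)} :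
    w ∈ R.weyl ↔ ∃ l, R.wordProd l = w := by
  constructor
  · intro h
    induction h using Subgroup.closure_induction with
    | mem x hx => obtain ⟨i, rfl⟩ := hx; exact ⟨[i], R.wordProd_singleton i⟩
    | one => exact ⟨[], rfl⟩
    | mul x y _ _ hx hy =>
      obtain ⟨l, rfl⟩ := hx; obtain ⟨l', rfl⟩ := hy
      exact ⟨l ++ l', R.wordProd_append l l'⟩
    | inv x _ hx => obtain ⟨l, rfl⟩ := hx; exact ⟨l.reverse, R.wordProd_reverse l⟩
  · rintro ⟨l, rfl⟩
    induction l with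
    | nil => exact R.weyl.one_mem
    | cons i t ih => exact R.wordProd_cons i t ▸ R.weyl.mul_mem (R.sRefl_mem_weyl i) ih

lemma seqProd_mem_weyl (l : List (Fin n)) : R.seqProd l ∈ R.weyl :=
  R.mem_weyl_iff.mpr ⟨l.reverse, rfl⟩

variable {R} {w : EuclideanSpace ℝ (Fin d) ≃ₗ[ℝ] EuclideanSpace ℝ (Fin d)}

lemma inner_apply_apply_of_mem_weyl (hw : w ∈ R.weyl) (x y : EuclideanSpace ℝ (Fin d)) :
    ⟪w x, w y⟫ = ⟪x, y⟫ := by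
  obtain ⟨l, rfl⟩ := R.mem_weyl_iff.mp hw
  induction l with
  | nil => rfl
  | cons i t ih => simpa [wordProd_cons, inner_sRefl_sRefl] using ih (R.mem_weyl_iff.mpr ⟨t, rfl⟩)

lemma apply_mem_of_mem_weyl (hw : w ∈ R.weyl) {β : EuclideanSpace ℝ (Fin d)} (hβ : β ∈ R.Φ) :
    w β ∈ R.Φ := by
  obtain ⟨l, rfl⟩ := R.mem_weyl_iff.mp hw
  induction l with
  | nil => exact hβ
  | cons i t ih =>
    rw [wordProd_cons, LinearEquiv.mul_apply]
    exact R.sRefl_apply_mem i (ih (R.mem_weyl_iff.mpr ⟨t, rfl⟩))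

lemma rsPair_apply_apply_of_mem_weyl (hw : w ∈ R.weyl) (x y : EuclideanSpace ℝ (Fin d)) :
    rsPair (w x) (w y) = rsPair x y := by
  simp only [rsPair, inner_apply_apply_of_mem_weyl hw]

lemma sRefl_mul_eq_mul_sRefl (hw : w ∈ R.weyl) {i u : Fin n} (h : w (R.α u) = R.α i) :
    R.sRefl i * w = w * R.sRefl u := by
  refine LinearEquiv.ext fun x => ?_
  have hpair : rsPair (w x) (R.α i) = rsPair x (R.α u) := by
    rw [← h, rsPair_apply_apply_of_mem_weyl hw]
  simp only [LinearEquiv.mul_apply, sRefl_apply, map_sub, map_smul, h, hpair]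

end Words

section InversionSet

variable {w : EuclideanSpace ℝ (Fin d) ≃ₗ[ℝ] EuclideanSpace ℝ (Fin d)}

def inversionSet (w : EuclideanSpace ℝ (Fin d) ≃ₗ[ℝ] EuclideanSpace ℝ (Fin d)) :
    Finset (EuclideanSpace ℝ (Fin d)) :=
  R.posRoots.filter fun γ => -(w γ) ∈ R.posRoots

variable {R}

lemma mem_inversionSet {γ : EuclideanSpace ℝ (Fin d)} :
    γ ∈ R.inversionSet w ↔ γ ∈ R.posRoots ∧ -(w γ) ∈ R.posRoots :=
  Finset.mem_filter

lemma inversionSet_one : R.inversionSet 1 = ∅ :=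
  Finset.eq_empty_of_forall_notMem fun _ hγ =>
    neg_notMem_posRoots (mem_inversionSet.mp hγ).1 (mem_inversionSet.mp hγ).2

lemma apply_mem_posRoots_iff (hw : w ∈ R.weyl) {γ : EuclideanSpace ℝ (Fin d)}
    (hγ : γ ∈ R.posRoots) : w γ ∈ R.posRoots ↔ γ ∉ R.inversionSet w := by
  rw [mem_inversionSet, not_and]
  refine ⟨fun h _ => neg_notMem_posRoots h, fun h => ?_⟩
  have hΦ := apply_mem_of_mem_weyl hw (mem_Φ_of_mem_posRoots hγ)
  exact (mem_posRoots_or_neg_mem hΦ).resolve_right (h hγ)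

lemma inv_apply_alpha_notMem_inversionSet (i : Fin n) :
    w⁻¹ (R.α i) ∉ R.inversionSet w := fun h =>
  R.neg_alpha_notMem_posRoots i (by simpa using (mem_inversionSet.mp h).2)

lemma inversionSet_sRefl_mul (hw : w ∈ R.weyl) (i : Fin n) (h : w⁻¹ (R.α i) ∈ R.posRoots) :
    R.inversionSet (R.sRefl i * w) = insert (w⁻¹ (R.α i)) (R.inversionSet w) := by
  ext γ
  simp only [Finset.mem_insert, mem_inversionSet, LinearEquiv.mul_apply]
  constructor
  · rintro ⟨hγ, hneg⟩
    by_cases hwγ : w γ = R.α i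
    · left
      simp [← hwγ]
    · refine .inr ⟨hγ, ?_⟩
      by_contra hpos
      have hwγpos := (mem_posRoots_or_neg_mem
        (apply_mem_of_mem_weyl hw (mem_Φ_of_mem_posRoots hγ))).resolve_right hpos
      exact neg_notMem_posRoots (R.sRefl_apply_mem_posRoots i hwγpos hwγ) hneg
  · rintro (rfl | ⟨hγ, hneg⟩)
    · simpa using ⟨h, R.alpha_mem_posRoots i⟩
    · refine ⟨hγ, ?_⟩
      have hne : -(w γ) ≠ R.α i := fun he => by
        have : -(w⁻¹ (R.α i)) = γ := by simp [← he]
        exact neg_notMem_posRoots h (this ▸ hγ)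
      simpa using R.sRefl_apply_mem_posRoots i hneg hne

lemma card_inversionSet_sRefl_mul (hw : w ∈ R.weyl) (i : Fin n)
    (h : w⁻¹ (R.α i) ∈ R.posRoots) :
    (R.inversionSet (R.sRefl i * w)).card = (R.inversionSet w).card + 1 := by
  rw [inversionSet_sRefl_mul hw i h,
    Finset.card_insert_of_notMem (inv_apply_alpha_notMem_inversionSet i)]

lemma card_inversionSet_sRefl_mul_le (hw : w ∈ R.weyl) (i : Fin n) :
    (R.inversionSet (R.sRefl i * w)).card ≤ (R.inversionSet w).card + 1 := by
  rcases mem_posRoots_or_neg_mem (apply_mem_of_mem_weyl (inv_mem hw) (R.α_mem i)) with h | h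
  · exact (card_inversionSet_sRefl_mul hw i h).le
  · have := card_inversionSet_sRefl_mul (mul_mem (R.sRefl_mem_weyl i) hw) i (by simpa using h)
    rw [← mul_assoc, sRefl_mul_self, one_mul] at this
    omega

lemma card_inversionSet_wordProd_le (l : List (Fin n)) :
    (R.inversionSet (R.wordProd l)).card ≤ l.length := by
  induction l with
  | nil => simp [wordProd, inversionSet_one]
  | cons i t ih =>
    have := card_inversionSet_sRefl_mul_le (R.mem_weyl_iff.mpr ⟨t, rfl⟩) i
    rw [wordProd_cons, List.length_cons]
    omega

lemma card_inversionSet_inv (w : EuclideanSpace ℝ (Fin d) ≃ₗ[ℝ] EuclideanSpace ℝ (Fin d)) :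
    (R.inversionSet w⁻¹).card = (R.inversionSet w).card := by
  refine Finset.card_nbij' (fun γ => -(w⁻¹ γ)) (fun γ => -(w γ)) ?_ ?_ ?_ ?_ <;>
    intro γ hγ <;> simp_all [mem_inversionSet]

@[simp]
lemma mul_sRefl_mul_sRefl (w : EuclideanSpace ℝ (Fin d) ≃ₗ[ℝ] EuclideanSpace ℝ (Fin d))
    (i : Fin n) : w * R.sRefl i * R.sRefl i = w := by
  rw [mul_assoc, sRefl_mul_self, mul_one]

lemma card_inversionSet_mul_sRefl (hw : w ∈ R.weyl) (i : Fin n) (h : w (R.α i) ∈ R.posRoots) :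
    (R.inversionSet (w * R.sRefl i)).card = (R.inversionSet w).card + 1 := by
  rw [← card_inversionSet_inv, ← card_inversionSet_inv w, mul_inv_rev, sRefl_inv]
  exact card_inversionSet_sRefl_mul (inv_mem hw) i (by simpa using h)

lemma card_inversionSet_mul_sRefl_of_neg (hw : w ∈ R.weyl) (i : Fin n)
    (h : -(w (R.α i)) ∈ R.posRoots) :
    (R.inversionSet (w * R.sRefl i)).card + 1 = (R.inversionSet w).card := by
  have := card_inversionSet_mul_sRefl (mul_mem hw (R.sRefl_mem_weyl i)) i (by simpa using h)
  rwa [mul_sRefl_mul_sRefl, eq_comm] at this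

end InversionSet

section Length

variable {R} {w w' : EuclideanSpace ℝ (Fin d) ≃ₗ[ℝ] EuclideanSpace ℝ (Fin d)}

lemma len_le_length {l : List (Fin n)} (h : R.wordProd l = w) : R.len w ≤ l.length :=
  Nat.sInf_le ⟨l, rfl, h⟩

lemma exists_wordProd_length_eq_len (hw : w ∈ R.weyl) :
    ∃ l : List (Fin n), l.length = R.len w ∧ R.wordProd l = w := by
  obtain ⟨l, hl⟩ := R.mem_weyl_iff.mp hw
  exact Nat.sInf_mem (s := {t | ∃ l, l.length = t ∧ R.wordProd l = w}) ⟨l.length, l, rfl, hl⟩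

lemma len_mul_sRefl_le (hw : w ∈ R.weyl) (i : Fin n) : R.len (w * R.sRefl i) ≤ R.len w + 1 := by
  obtain ⟨l, hlen, rfl⟩ := exists_wordProd_length_eq_len hw
  simpa [hlen] using len_le_length (l := l ++ [i]) (by rw [wordProd_append, wordProd_singleton])

lemma exchange (l : List (Fin n)) (u : Fin n) (h : -(R.wordProd l (R.α u)) ∈ R.posRoots) :
    ∃ l' : List (Fin n), l'.length + 1 = l.length ∧
      R.wordProd l' = R.wordProd l * R.sRefl u := by
  induction l with
  | nil => exact absurd (by simpa [wordProd] using h) (R.neg_alpha_notMem_posRoots u)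
  | cons i t ih =>
    have ht : R.wordProd t ∈ R.weyl := R.mem_weyl_iff.mpr ⟨t, rfl⟩
    by_cases hneg : -(R.wordProd t (R.α u)) ∈ R.posRoots
    · obtain ⟨t', hlen, ht'⟩ := ih hneg
      exact ⟨i :: t', by simp [hlen], by rw [wordProd_cons, wordProd_cons, ht', mul_assoc]⟩
    · have hpos := (mem_posRoots_or_neg_mem (apply_mem_of_mem_weyl ht (R.α_mem u))).resolve_right
        hneg
      -- the only positive root made negative by `s i` is `α i`
      have hαi : R.wordProd t (R.α u) = R.α i := by
        by_contra hne
        rw [wordProd_cons, LinearEquiv.mul_apply] at h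
        exact neg_notMem_posRoots (R.sRefl_apply_mem_posRoots i hpos hne) h
      refine ⟨t, rfl, ?_⟩
      rw [wordProd_cons, sRefl_mul_eq_mul_sRefl ht hαi, mul_sRefl_mul_sRefl]

lemma exists_descent (hw : w ∈ R.weyl) (h : 0 < R.len w) :
    ∃ u, -(w (R.α u)) ∈ R.posRoots ∧ R.len (w * R.sRefl u) < R.len w := by
  obtain ⟨l, hlen, rfl⟩ := exists_wordProd_length_eq_len hw
  obtain rfl | ⟨t, u, rfl⟩ := l.eq_nil_or_concat
  · simp [← hlen] at h
  have hwt : R.wordProd (t.concat u) = R.wordProd t * R.sRefl u := by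
    rw [List.concat_eq_append, wordProd_append, wordProd_singleton]
  have hshort : R.len (R.wordProd t) < R.len (R.wordProd t * R.sRefl u) := by
    rw [← hwt, ← hlen, List.length_concat]
    exact Nat.lt_succ_of_le (len_le_length rfl)
  refine ⟨u, ?_, by rwa [hwt, mul_sRefl_mul_sRefl]⟩
  by_contra hneg
  have hpos := (mem_posRoots_or_neg_mem (apply_mem_of_mem_weyl hw (R.α_mem u))).resolve_right hneg
  rw [hwt] at hpos
  obtain ⟨t', ht'len, ht'⟩ := exchange t u (by simpa using hpos)
  have := len_le_length (ht'.trans hwt.symm)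
  simp only [List.length_concat] at hlen
  omega

lemma len_eq_card_inversionSet (hw : w ∈ R.weyl) : R.len w = (R.inversionSet w).card := by
  refine le_antisymm ?_ ?_
  · induction h : R.len w using Nat.strong_induction_on generalizing w with
    | _ k ih =>
      rcases Nat.eq_zero_or_pos k with rfl | hk
      · exact Nat.zero_le _
      obtain ⟨u, hu, hlt⟩ := exists_descent hw (h ▸ hk)
      have hwu := mul_mem hw (R.sRefl_mem_weyl u)
      have := len_mul_sRefl_le hwu u
      rw [mul_sRefl_mul_sRefl] at this
      have := ih _ (h ▸ hlt) hwu rfl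
      have := card_inversionSet_mul_sRefl_of_neg hw u hu
      omega
  · obtain ⟨l, hlen, rfl⟩ := exists_wordProd_length_eq_len hw
    exact hlen ▸ card_inversionSet_wordProd_le l

lemma len_lt_len_mul_sRefl_iff (hw : w ∈ R.weyl) (j : Fin n) :
    R.len w < R.len (w * R.sRefl j) ↔ w (R.α j) ∈ R.posRoots := by
  rw [len_eq_card_inversionSet hw, len_eq_card_inversionSet (mul_mem hw (R.sRefl_mem_weyl j))]
  refine ⟨fun hlt => by_contra fun hpos => ?_, fun hpos => ?_⟩
  · have := card_inversionSet_mul_sRefl_of_neg hw j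
      (neg_mem_posRoots_of_notMem (apply_mem_of_mem_weyl hw (R.α_mem j)) hpos)
    omega
  · rw [card_inversionSet_mul_sRefl hw j hpos]
    exact Nat.lt_succ_self _

lemma eq_one_of_inversionSet_eq_empty (hw : w ∈ R.weyl) (h : R.inversionSet w = ∅) : w = 1 := by
  obtain ⟨l, hlen, rfl⟩ := exists_wordProd_length_eq_len hw
  rw [len_eq_card_inversionSet hw, h, Finset.card_empty, List.length_eq_zero_iff] at hlen
  rw [hlen]
  rfl

lemma apply_mem_posRoots_of_inversionSet_eq (hw' : w' ∈ R.weyl)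
    (h : R.inversionSet w = R.inversionSet w') {γ : EuclideanSpace ℝ (Fin d)} (hγ : γ ∈ R.Φ)
    (hwγ : w γ ∈ R.posRoots) : w' γ ∈ R.posRoots := by
  rcases mem_posRoots_or_neg_mem hγ with hpos | hneg
  · refine (apply_mem_posRoots_iff hw' hpos).mpr ?_
    rw [← h]
    exact fun hN => neg_notMem_posRoots hwγ (mem_inversionSet.mp hN).2
  · have : -γ ∈ R.inversionSet w := mem_inversionSet.mpr ⟨hneg, by simpa using hwγ⟩
    have := (mem_inversionSet.mp (h ▸ this : -γ ∈ R.inversionSet w')).2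
    rwa [map_neg, neg_neg] at this

lemma eq_of_inversionSet_eq (hw : w ∈ R.weyl) (hw' : w' ∈ R.weyl)
    (h : R.inversionSet w = R.inversionSet w') : w = w' := by
  have hmem : w' * w⁻¹ ∈ R.weyl := mul_mem hw' (inv_mem hw)
  refine (mul_inv_eq_one.mp (eq_one_of_inversionSet_eq_empty hmem ?_)).symm
  refine Finset.eq_empty_of_forall_notMem fun δ hδ => ?_
  have hpos : w' (w⁻¹ δ) ∈ R.posRoots :=
    apply_mem_posRoots_of_inversionSet_eq hw' h
      (apply_mem_of_mem_weyl (inv_mem hw) (mem_Φ_of_mem_posRoots (mem_inversionSet.mp hδ).1))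
      (by simpa using (mem_inversionSet.mp hδ).1)
  exact neg_notMem_posRoots hpos (mem_inversionSet.mp hδ).2

end Length

section Weight

lemma exists_inner_alpha_eq (b : Fin n → ℝ) :
    ∃ ω : EuclideanSpace ℝ (Fin d), ∀ v, ⟪ω, R.α v⟫ = b v := by
  set G := Matrix.gram ℝ R.α
  have hG : IsUnit G.det :=
    (Matrix.det_gram_ne_zero_iff_linearIndependent.mpr R.indep).isUnit
  refine ⟨∑ u, (G⁻¹.mulVec b) u • R.α u, fun v => ?_⟩
  have hsolve : G.mulVec (G⁻¹.mulVec b) = b := by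
    rw [Matrix.mulVec_mulVec, Matrix.mul_nonsing_inv _ hG, Matrix.one_mulVec]
  rw [← congrFun hsolve v, sum_inner, Matrix.mulVec, dotProduct]
  refine Finset.sum_congr rfl fun u _ => ?_
  rw [real_inner_smul_left, real_inner_comm, mul_comm]
  rfl

def weight (I : Finset (Fin n)) : EuclideanSpace ℝ (Fin d) :=
  (R.exists_inner_alpha_eq fun v => if v ∈ I then ⟪R.α v, R.α v⟫ / 2 else 0).choose

lemma inner_weight_alpha (I : Finset (Fin n)) (v : Fin n) :
    ⟪R.weight I, R.α v⟫ = if v ∈ I then ⟪R.α v, R.α v⟫ / 2 else 0 :=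
  (R.exists_inner_alpha_eq _).choose_spec v

lemma inner_weight_alpha_nonneg (I : Finset (Fin n)) (v : Fin n) : 0 ≤ ⟪R.weight I, R.α v⟫ := by
  rw [inner_weight_alpha]
  split_ifs
  exacts [div_nonneg real_inner_self_nonneg zero_le_two, le_rfl]

lemma rsPair_weight_alpha (I : Finset (Fin n)) (v : Fin n) :
    rsPair (R.weight I) (R.α v) = if v ∈ I then 1 else 0 := by
  have := R.inner_alpha_ne_zero v
  rw [rsPair, inner_weight_alpha]
  split_ifs
  · field_simp
  · simp

lemma mem_posRoots_sdiff_parPos_iff (I : Finset (Fin n)) {γ : EuclideanSpace ℝ (Fin d)}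
    (hγ : γ ∈ R.Φ) : γ ∈ R.posRoots \ R.parPos Iᶜ ↔ 0 < ⟪R.weight I, γ⟫ := by
  have hsum := R.inner_eq_sum_coord hγ (R.weight I)
  rw [Finset.mem_sdiff, parPos, Finset.mem_filter, R.mem_span_alpha_iff hγ]
  simp only [Finset.mem_compl, not_not, not_and, not_forall]
  constructor
  · rintro ⟨hpos, hsupp⟩
    obtain ⟨u, huI, hu⟩ := hsupp hpos
    have hcoord := (mem_posRoots_iff hγ).mp hpos
    rw [hsum]
    refine Finset.sum_pos' (fun v _ => mul_nonneg (hcoord v) (R.inner_weight_alpha_nonneg I v))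
      ⟨u, Finset.mem_univ u, mul_pos ((hcoord u).lt_of_ne' hu) ?_⟩
    rw [inner_weight_alpha, if_pos huI]
    exact half_pos (real_inner_self_pos.mpr (R.alpha_ne_zero u))
  · intro h
    have hpos : γ ∈ R.posRoots := by
      by_contra hn
      have := R.inner_nonneg_of_mem_posRoots (R.inner_weight_alpha_nonneg I)
        (neg_mem_posRoots_of_notMem hγ hn)
      rw [inner_neg_right] at this
      linarith
    refine ⟨hpos, fun _ => by_contra fun hzero => h.ne' ?_⟩
    push Not at hzero
    rw [hsum]
    refine Finset.sum_eq_zero fun u _ => ?_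
    by_cases hu : u ∈ I
    · rw [hzero u hu, zero_mul]
    · rw [inner_weight_alpha, if_neg hu, mul_zero]

end Weight

section Game

variable (I : Finset (Fin n))

def configVec (c : Fin n → ℤ) : EuclideanSpace ℝ (Fin d) := ∑ u, (c u : ℝ) • R.α u

lemma configVec_injective : Function.Injective R.configVec := fun c c' h => by
  have := congrArg R.coord h
  simp only [configVec, coord_sum_smul] at this
  exact funext fun u => by exact_mod_cast congrFun this u

lemma configVec_update (c : Fin n → ℤ) (v : Fin n) (k : ℤ) :
    R.configVec (Function.update c v k) = R.configVec c + ((k - c v : ℤ) : ℝ) • R.α v := by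
  simp only [configVec, ← Finset.add_sum_erase _ _ (Finset.mem_univ v), Function.update_self]
  rw [Finset.sum_congr rfl fun u hu => by rw [Function.update_of_ne (Finset.ne_of_mem_erase hu)]]
  push_cast
  rw [sub_smul]
  abel

lemma rsPair_configVec_sub_weight (c : Fin n → ℤ) (v : Fin n) :
    rsPair (R.configVec c - R.weight I) (R.α v) = 2 * c v - R.chipBound I c v := by
  have hform (u : Fin n) : corootForm (R.α v) (R.α u) = R.cartan u v := (R.cartan_cast u v).symm
  have hweight : corootForm (R.α v) (R.weight I) = if v ∈ I then 1 else 0 :=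
    R.rsPair_weight_alpha I v
  change corootForm (R.α v) _ = _
  rw [map_sub, configVec, map_sum, ← Finset.add_sum_erase _ _ (Finset.mem_univ v)]
  simp only [map_smul, smul_eq_mul, hform, hweight, R.cartan_self, chipBound]
  push_cast
  simp only [mul_comm _ ((c _ : ℤ) : ℝ), mul_neg, Finset.sum_neg_distrib]
  ring

lemma sad_iff_inner_neg (c : Fin n → ℤ) (v : Fin n) :
    R.Sad I c v ↔ ⟪R.configVec c - R.weight I, R.α v⟫ < 0 := by
  have hpair := R.rsPair_configVec_sub_weight I c v
  rw [rsPair, div_eq_iff (R.inner_alpha_ne_zero v)] at hpair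
  have hα := real_inner_self_pos.mpr (R.alpha_ne_zero v)
  rw [Sad, ← Int.cast_lt (R := ℝ)]
  push_cast
  constructor <;> intro h <;> nlinarith

lemma configVec_fire_sub_weight (c : Fin n → ℤ) (v : Fin n) :
    R.configVec (R.fire I c v) - R.weight I = R.sRefl v (R.configVec c - R.weight I) := by
  rw [fire, configVec_update, sRefl_apply, rsPair_configVec_sub_weight]
  push_cast
  rw [show (R.chipBound I c v : ℝ) - c v - c v = -(2 * c v - R.chipBound I c v) by ring,
    neg_smul]
  abel

lemma configVec_foldl_fire_sub_weight (l : List (Fin n)) (c : Fin n → ℤ) :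
    R.configVec (l.foldl (R.fire I) c) - R.weight I =
      R.seqProd l (R.configVec c - R.weight I) := by
  induction l generalizing c with
  | nil => rfl
  | cons v t ih =>
    rw [List.foldl_cons, ih, configVec_fire_sub_weight, seqProd_cons, LinearEquiv.mul_apply]

lemma configVec_play_sub_weight (l : List (Fin n)) :
    R.configVec (R.play I l) - R.weight I = R.seqProd l (-R.weight I) := by
  rw [play, configVec_foldl_fire_sub_weight]
  simp [configVec]

lemma play_eq_of_seqProd_eq {l l' : List (Fin n)} (h : R.seqProd l = R.seqProd l') :
    R.play I l = R.play I l' :=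
  R.configVec_injective <| sub_left_injective (b := R.weight I) <| by
    simp only [configVec_play_sub_weight, h]

variable {R I} {w : EuclideanSpace ℝ (Fin d) ≃ₗ[ℝ] EuclideanSpace ℝ (Fin d)}

lemma sad_iff_inv_apply_alpha_mem {c : Fin n → ℤ} (hw : w ∈ R.weyl)
    (hc : R.configVec c - R.weight I = w (-R.weight I)) (v : Fin n) :
    R.Sad I c v ↔ w⁻¹ (R.α v) ∈ R.posRoots \ R.parPos Iᶜ := by
  have hinner : ⟪w (-R.weight I), R.α v⟫ = -⟪R.weight I, w⁻¹ (R.α v)⟫ := by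
    rw [← inner_neg_left, ← inner_apply_apply_of_mem_weyl hw (-R.weight I)]
    simp
  rw [sad_iff_inner_neg, hc, hinner, neg_lt_zero, R.mem_posRoots_sdiff_parPos_iff I
    (apply_mem_of_mem_weyl (inv_mem hw) (R.α_mem v))]

lemma inversionSet_of_validFrom {l : List (Fin n)} {c : Fin n → ℤ} (hw : w ∈ R.weyl)
    (hc : R.configVec c - R.weight I = w (-R.weight I))
    (hN : R.inversionSet w ⊆ R.posRoots \ R.parPos Iᶜ) (hl : R.ValidFrom I c l) :
    R.inversionSet (R.seqProd l * w) ⊆ R.posRoots \ R.parPos Iᶜ ∧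
      (R.inversionSet (R.seqProd l * w)).card = l.length + (R.inversionSet w).card := by
  induction l generalizing c w with
  | nil => simpa [seqProd] using hN
  | cons v t ih =>
    obtain ⟨hsad, hrest⟩ := hl
    have hmem := (sad_iff_inv_apply_alpha_mem hw hc v).mp hsad
    have hpos := (Finset.mem_sdiff.mp hmem).1
    have hc' : R.configVec (R.fire I c v) - R.weight I = (R.sRefl v * w) (-R.weight I) := by
      rw [configVec_fire_sub_weight, hc, LinearEquiv.mul_apply]
    have hN' : R.inversionSet (R.sRefl v * w) ⊆ R.posRoots \ R.parPos Iᶜ := by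
      rw [inversionSet_sRefl_mul hw v hpos]
      exact Finset.insert_subset hmem hN
    obtain ⟨hsub, hcard⟩ := ih (mul_mem (R.sRefl_mem_weyl v) hw) hc' hN' hrest
    rw [seqProd_cons, mul_assoc]
    refine ⟨hsub, ?_⟩
    rw [hcard, card_inversionSet_sRefl_mul hw v hpos, List.length_cons]
    ring

lemma inversionSet_seqProd_of_valid {l : List (Fin n)} (hl : R.Valid I l) :
    R.inversionSet (R.seqProd l) ⊆ R.posRoots \ R.parPos Iᶜ ∧
      (R.inversionSet (R.seqProd l)).card = l.length := by
  simpa [inversionSet_one] using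
    inversionSet_of_validFrom R.weyl.one_mem (by simp [configVec]) (by simp [inversionSet_one]) hl

lemma inversionSet_seqProd_of_maximalSeq {l : List (Fin n)} (hl : R.MaximalSeq I l) :
    R.inversionSet (R.seqProd l) = R.posRoots \ R.parPos Iᶜ := by
  have hw := R.seqProd_mem_weyl l
  refine (inversionSet_seqProd_of_valid hl.1).1.antisymm fun γ hγ => ?_
  have hγpos := (Finset.mem_sdiff.mp hγ).1
  have hdominant (u : Fin n) : 0 ≤ ⟪R.seqProd l (-R.weight I), R.α u⟫ := by
    have := hl.2 u
    rwa [sad_iff_inner_neg, configVec_play_sub_weight, not_lt] at this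
  by_contra hN
  have hγ_nonneg :=
    R.inner_nonneg_of_mem_posRoots hdominant ((apply_mem_posRoots_iff hw hγpos).mpr hN)
  rw [inner_apply_apply_of_mem_weyl hw, inner_neg_left] at hγ_nonneg
  have := (R.mem_posRoots_sdiff_parPos_iff I (mem_Φ_of_mem_posRoots hγpos)).mp hγ
  linarith

lemma validFrom_append {l l' : List (Fin n)} {c : Fin n → ℤ} (hl : R.ValidFrom I c l)
    (hl' : R.ValidFrom I (l.foldl (R.fire I) c) l') : R.ValidFrom I c (l ++ l') := by
  induction l generalizing c with
  | nil => exact hl'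
  | cons v t ih => exact ⟨hl.1, ih hl.2 hl'⟩

variable (R I) in
lemma exists_maximalSeq : ∃ l, R.MaximalSeq I l := by
  let lengths : Set ℕ := {k | ∃ l, R.Valid I l ∧ l.length = k}
  have hbdd : BddAbove lengths := by
    refine ⟨(R.posRoots \ R.parPos Iᶜ).card, ?_⟩
    rintro _ ⟨l, hl, rfl⟩
    obtain ⟨hsub, hcard⟩ := inversionSet_seqProd_of_valid hl
    exact hcard ▸ Finset.card_le_card hsub
  obtain ⟨l, hl, hlen⟩ := Nat.sSup_mem (s := lengths) ⟨0, [], trivial, rfl⟩ hbdd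
  refine ⟨l, hl, fun v hsad => ?_⟩
  have hlonger : l.length + 1 ∈ lengths :=
    ⟨l ++ [v], validFrom_append hl ⟨hsad, trivial⟩, by simp⟩
  have := le_csSup hbdd hlonger
  omega

end Game

section MinimalRepresentatives

variable {R} {I : Finset (Fin n)} {w : EuclideanSpace ℝ (Fin d) ≃ₗ[ℝ] EuclideanSpace ℝ (Fin d)}

lemma apply_mem_posRoots_of_coord_ne_zero (hw : w ∈ R.weyl) {γ : EuclideanSpace ℝ (Fin d)}
    (hγ : γ ∈ R.posRoots) (h : ∀ u, R.coord γ u ≠ 0 → w (R.α u) ∈ R.posRoots) :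
    w γ ∈ R.posRoots := by
  have hΦ := mem_Φ_of_mem_posRoots hγ
  have hcoord : R.coord (w γ) = ∑ u, R.coord γ u • R.coord (w (R.α u)) := by
    conv_lhs => rw [R.eq_sum_coord hΦ]
    simp only [map_sum, map_smul]
  refine (mem_posRoots_iff (apply_mem_of_mem_weyl hw hΦ)).mpr fun v => ?_
  rw [hcoord, Finset.sum_apply]
  refine Finset.sum_nonneg fun u _ => ?_
  by_cases hu : R.coord γ u = 0
  · simp [hu]
  · exact mul_nonneg ((mem_posRoots_iff hΦ).mp hγ u)
      ((mem_posRoots_iff (apply_mem_of_mem_weyl hw (R.α_mem u))).mp (h u hu) v)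

lemma inversionSet_subset_of_mem_minReps (hw : w ∈ R.minReps I) :
    R.inversionSet w ⊆ R.posRoots \ R.parPos Iᶜ := by
  intro γ hγ
  obtain ⟨hγpos, hneg⟩ := mem_inversionSet.mp hγ
  refine Finset.mem_sdiff.mpr ⟨hγpos, fun hpar => neg_notMem_posRoots ?_ hneg⟩
  have hsupp := (R.mem_span_alpha_iff (mem_Φ_of_mem_posRoots hγpos) Iᶜ).mp
    (Finset.mem_filter.mp hpar).2
  refine apply_mem_posRoots_of_coord_ne_zero hw.1 hγpos fun u hu => ?_
  have huI : u ∉ I := fun huI => hu (hsupp u (Finset.notMem_compl.mpr huI))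
  exact (len_lt_len_mul_sRefl_iff hw.1 u).mp (hw.2 u huI)

lemma mem_minReps_of_inversionSet_eq (hw : w ∈ R.weyl)
    (h : R.inversionSet w = R.posRoots \ R.parPos Iᶜ) : w ∈ R.minReps I := by
  refine ⟨hw, fun j hj => (len_lt_len_mul_sRefl_iff hw j).mpr ?_⟩
  refine (apply_mem_posRoots_iff hw (R.alpha_mem_posRoots j)).mpr fun hN => ?_
  rw [h, Finset.mem_sdiff] at hN
  exact hN.2 (Finset.mem_filter.mpr ⟨R.alpha_mem_posRoots j,
    Submodule.subset_span ⟨j, Finset.mem_compl.mpr hj, rfl⟩⟩)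

end MinimalRepresentatives

end RootSystemBase

/-- Every maximal valid firing sequence has length `ℓ(w_0^J) = |Φ⁺ \\ Φ_J⁺|`,
where `w_0^J` is the unique longest element of `W^J`; all maximal sequences give the word
`w_0^J` and hence terminate in one and the same final configuration. -/
theorem statement3 {n d : ℕ} (R : RootSystemBase n d) (I : Finset (Fin n)) :
    ∃ w0 : EuclideanSpace ℝ (Fin d) ≃ₗ[ℝ] EuclideanSpace ℝ (Fin d),
      w0 ∈ R.minReps I ∧
      (∀ w ∈ R.minReps I, R.len w ≤ R.len w0) ∧
      (∀ w ∈ R.minReps I, R.len w = R.len w0 → w = w0) ∧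
      R.len w0 = (R.posRoots \ R.parPos Iᶜ).card ∧
      (∀ l : List (Fin n), R.MaximalSeq I l →
        l.length = (R.posRoots \ R.parPos Iᶜ).card ∧ R.seqProd l = w0) ∧
      (∀ l l' : List (Fin n), R.MaximalSeq I l → R.MaximalSeq I l' →
        R.play I l = R.play I l') := by
  open RootSystemBase in
  obtain ⟨l₀, hl₀⟩ := R.exists_maximalSeq I
  have hw₀ := R.seqProd_mem_weyl l₀
  have hN₀ := inversionSet_seqProd_of_maximalSeq hl₀
  have hlen₀ : R.len (R.seqProd l₀) = (R.posRoots \ R.parPos Iᶜ).card := by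
    rw [len_eq_card_inversionSet hw₀, hN₀]
  have hseq (l : List (Fin n)) (hl : R.MaximalSeq I l) :
      l.length = (R.posRoots \ R.parPos Iᶜ).card ∧ R.seqProd l = R.seqProd l₀ := by
    have hN := inversionSet_seqProd_of_maximalSeq hl
    refine ⟨?_, eq_of_inversionSet_eq (R.seqProd_mem_weyl l) hw₀ (hN.trans hN₀.symm)⟩
    rw [← (inversionSet_seqProd_of_valid hl.1).2, hN]
  refine ⟨R.seqProd l₀, mem_minReps_of_inversionSet_eq hw₀ hN₀, fun w hw => ?_,
    fun w hw hlen => ?_, hlen₀, hseq, fun l l' hl hl' => ?_⟩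
  · rw [len_eq_card_inversionSet hw.1, hlen₀]
    exact Finset.card_le_card (inversionSet_subset_of_mem_minReps hw)
  · refine eq_of_inversionSet_eq hw.1 hw₀ (.trans ?_ hN₀.symm)
    refine Finset.eq_of_subset_of_card_le (inversionSet_subset_of_mem_minReps hw) ?_
    rw [← len_eq_card_inversionSet hw.1, hlen, hlen₀]
  · exact R.play_eq_of_seqProd_eq I ((hseq l hl).2.trans (hseq l' hl').2.symm)
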